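/- Suppose the velocities satisfy the rolling constraints ẋ = r cos θ φ̇ and ẏ = r sin θ φ̇, and define p₁ = h φ̇ + m_b b r cos α α̇ and p₂ = f(α) θ̇. Then the WIP Lagrangian, expressed in the variables (α, α̇, p₁, p₂), equals l_c(α, α̇, p) = ½ p₁²/h + ½ p₂²/f(α) + ½ (m_b b² + I_Byy − m_b² b² r² cos²α / h) α̇² − m_b g b cos α. -/
import Mathlib


open Real

/-- The α-dependent yaw inertia I_θ(α) of the WIP. -/
noncomputable def Itheta (m_b m_W b d I_Wzz I_Bxx I_Bz : ℝ) (α : ℝ) : ℝ :=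
  2 * I_Wzz + I_Bz * (cos α) ^ 2 + 2 * m_W * d ^ 2 + (I_Bxx + m_b * b ^ 2) * (sin α) ^ 2

/-- f(α) = I_θ(α) + (d²/(2r²)) I_Wyy. -/
noncomputable def fWip (m_b m_W b r d I_Wyy I_Wzz I_Bxx I_Bz : ℝ) (α : ℝ) : ℝ :=
  Itheta m_b m_W b d I_Wzz I_Bxx I_Bz α + d ^ 2 / (2 * r ^ 2) * I_Wyy

/-- The WIP Lagrangian in the variables q = (x, y, θ, α, φ). -/
noncomputable def Lwip5 (m_b m_W b g r d I_Wyy I_Wzz I_Bxx I_Byy I_Bz : ℝ)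
    (θ α xdot ydot θdot αdot φdot : ℝ) : ℝ :=
  1 / 2 * (m_b + 2 * m_W) * (xdot ^ 2 + ydot ^ 2)
    + 1 / 2 * fWip m_b m_W b r d I_Wyy I_Wzz I_Bxx I_Bz α * θdot ^ 2
    + 1 / 2 * (m_b * b ^ 2 + I_Byy) * αdot ^ 2
    + I_Wyy * φdot ^ 2
    + m_b * b * sin α * θdot * (-sin θ * xdot + cos θ * ydot)
    + m_b * b * cos α * αdot * (cos θ * xdot + sin θ * ydot)
    - m_b * b * g * cos α

/-- On the rolling constraints, the WIP Lagrangian expressed in the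
variables (α, α̇, p₁, p₂) equals
l_c = ½ p₁²/h + ½ p₂²/f(α) + ½ (m_b b² + I_Byy − m_b² b² r² cos²α / h) α̇² − m_b g b cos α. -/
theorem wip_lagrangian_in_momentum_variables
    (m_b m_W b r d g I_Wyy I_Wzz I_Bxx I_Byy I_Bz : ℝ)
    (hmb : 0 < m_b) (hmW : 0 < m_W) (hb : 0 < b) (hr : 0 < r) (hd : 0 < d)
    (hg : 0 < g) (hIWyy : 0 < I_Wyy) (hIWzz : 0 < I_Wzz) (hIBxx : 0 < I_Bxx)
    (hIByy : 0 < I_Byy) (hIBz : 0 < I_Bz)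
    (θ α xdot ydot θdot αdot φdot p₁ p₂ : ℝ)
    (hx : xdot = r * cos θ * φdot) (hy : ydot = r * sin θ * φdot)
    (hp₁ : p₁ = ((m_b + 2 * m_W) * r ^ 2 + 2 * I_Wyy) * φdot
        + m_b * b * r * cos α * αdot)
    (hp₂ : p₂ = fWip m_b m_W b r d I_Wyy I_Wzz I_Bxx I_Bz α * θdot) :
    Lwip5 m_b m_W b g r d I_Wyy I_Wzz I_Bxx I_Byy I_Bz θ α xdot ydot θdot αdot φdot
      = 1 / 2 * p₁ ^ 2 / ((m_b + 2 * m_W) * r ^ 2 + 2 * I_Wyy)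
        + 1 / 2 * p₂ ^ 2 / fWip m_b m_W b r d I_Wyy I_Wzz I_Bxx I_Bz α
        + 1 / 2 * (m_b * b ^ 2 + I_Byy
            - m_b ^ 2 * b ^ 2 * r ^ 2 * (cos α) ^ 2
                / ((m_b + 2 * m_W) * r ^ 2 + 2 * I_Wyy)) * αdot ^ 2
        - m_b * g * b * cos α := by

  have hh : ((m_b + 2 * m_W) * r ^ 2 + 2 * I_Wyy) ≠ 0 := by positivity
  have hf : fWip m_b m_W b r d I_Wyy I_Wzz I_Bxx I_Bz α ≠ 0 := by
    have : 0 < fWip m_b m_W b r d I_Wyy I_Wzz I_Bxx I_Bz α := by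
      unfold fWip Itheta; positivity
    linarith
  have hpyth := sin_sq_add_cos_sq θ
  have h1 : xdot ^ 2 + ydot ^ 2 = r ^ 2 * φdot ^ 2 := by
    subst hx hy; linear_combination r ^ 2 * φdot ^ 2 * hpyth
  have h2 : -sin θ * xdot + cos θ * ydot = 0 := by subst hx hy; ring
  have h3 : cos θ * xdot + sin θ * ydot = r * φdot := by
    subst hx hy; linear_combination r * φdot * hpyth
  unfold Lwip5
  rw [h1, h2, h3, hp₁, hp₂]
  field_simp
  ring
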